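/- Let α > 0, ν := ⌈α⌉ − 1, and let f ∈ C^ν[−1,1] satisfy sup_{t>0} t^(ν−α)·ω₂(f^(ν), t; [−1,1]) =: |f|_α < ∞ with α ∉ ℕ. Let L be a polynomial of degree at most ν+1 such that L^(ν) interpolates f^(ν) at −1 and 1, and set g := f − L. Then ω₁(g^(ν), t; [−1,1]) ≤ c(α)·t^(α−ν)·|f|_α for all 0 < t ≤ 2. -/

import Mathlib

/-
Let `ν = ⌈α⌉ - 1` and `β = α - ν ∈ (0, 1)`. The function `h = f^(ν) - L^(ν)` vanishes at `±1`, and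
since `L^(ν)` is affine it has the same second differences as `f^(ν)`, so `ω₂(h, t) ≤ B t^β`.
Vanishing at the endpoints gives `‖h‖ ≤ ω₂(h, 1) ≤ B`, hence `ω₁(h, t) ≤ 2B`. For `t ≤ 2/3` every
first difference of step `≤ t` extends by its own length inside `[-1, 1]`, which gives the
Marchaud recursion `ω₁(h, t) ≤ ω₁(h, 2t)/2 + ω₂(h, t)/2`; iterating it down from scale `2/3`
yields `ω₁(h, t) ≤ c t^β B` since `2^(β-1) < 1`.
-/

open Set

/-- The `k`-th modulus of smoothness of `f` on `[a,b]`. -/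
noncomputable def wmod (k : ℕ) (f : ℝ → ℝ) (t a b : ℝ) : ℝ :=
  sSup {v : ℝ | ∃ u x : ℝ, 0 < u ∧ u ≤ t ∧ a ≤ x - k * u / 2 ∧ x + k * u / 2 ≤ b ∧
    v = |∑ i ∈ Finset.range (k + 1),
          (-1 : ℝ) ^ i * (k.choose i : ℝ) * f (x + ((k : ℝ) / 2 - i) * u)|}

open Polynomial

section Polynomial

variable {𝕜 : Type*} [NontriviallyNormedField 𝕜]

theorem Polynomial.iteratedDeriv_eval (p : 𝕜[X]) (n : ℕ) :
    iteratedDeriv n (fun x => p.eval x) = fun x => (derivative^[n] p).eval x := by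
  rw [iteratedDeriv_eq_iterate]
  induction n with
  | zero => rfl
  | succ n ih =>
    rw [Function.iterate_succ_apply', ih, Function.iterate_succ_apply']
    ext x
    exact Polynomial.deriv _

theorem iteratedDerivWithin_sub_eval {f : 𝕜 → 𝕜} {s : Set 𝕜} {x : 𝕜} {n : ℕ}
    (hf : ContDiffOn 𝕜 n f s) (hs : UniqueDiffOn 𝕜 s) (hx : x ∈ s) (p : 𝕜[X]) :
    iteratedDerivWithin n (fun y => f y - p.eval y) s x =
      iteratedDerivWithin n f s x - (derivative^[n] p).eval x := by
  have hc : ContDiff 𝕜 n (fun y => p.eval y) := by simpa using p.contDiff_aeval (𝕜 := 𝕜) n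
  have hp : iteratedDerivWithin n (fun y => p.eval y) s x = (derivative^[n] p).eval x := by
    rw [iteratedDerivWithin_eq_iteratedDeriv hs hc.contDiffAt hx, p.iteratedDeriv_eval]
  rw [← hp]
  exact iteratedDerivWithin_sub hx hs (hf x hx) hc.contDiffWithinAt

end Polynomial

section Modulus

variable {f g : ℝ → ℝ} {k : ℕ} {t a b : ℝ}

theorem wmod_nonneg : 0 ≤ wmod k f t a b :=
  Real.sSup_nonneg fun _ ⟨_, _, _, _, _, _, hv⟩ => hv ▸ abs_nonneg _

theorem wmod_congr (hfg : EqOn f g (Icc a b)) : wmod k f t a b = wmod k g t a b := by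
  have hsum : ∀ u x, 0 < u → a ≤ x - k * u / 2 → x + k * u / 2 ≤ b →
      ∑ i ∈ Finset.range (k + 1), (-1 : ℝ) ^ i * (k.choose i : ℝ) *
          f (x + ((k : ℝ) / 2 - i) * u) =
        ∑ i ∈ Finset.range (k + 1), (-1 : ℝ) ^ i * (k.choose i : ℝ) *
          g (x + ((k : ℝ) / 2 - i) * u) := by
    intro u x hu ha hb
    refine Finset.sum_congr rfl fun i hi => ?_
    have hik : (i : ℝ) ≤ k := by exact_mod_cast Finset.mem_range_succ_iff.mp hi
    rw [hfg ⟨by nlinarith, by nlinarith [i.cast_nonneg (α := ℝ)]⟩]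
  unfold wmod
  congr 1
  ext v
  constructor
  · rintro ⟨u, x, hu, hut, ha, hb, rfl⟩
    exact ⟨u, x, hu, hut, ha, hb, by rw [hsum u x hu ha hb]⟩
  · rintro ⟨u, x, hu, hut, ha, hb, rfl⟩
    exact ⟨u, x, hu, hut, ha, hb, by rw [hsum u x hu ha hb]⟩

theorem wmod_one_eq (f : ℝ → ℝ) (t a b : ℝ) :
    wmod 1 f t a b = sSup {v | ∃ u x, 0 < u ∧ u ≤ t ∧ a ≤ x - u / 2 ∧ x + u / 2 ≤ b ∧
      v = |f (x + u / 2) - f (x - u / 2)|} := by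
  simp only [wmod, Finset.sum_range_succ, Finset.sum_range_zero]
  norm_num
  ring_nf

theorem wmod_two_eq (f : ℝ → ℝ) (t a b : ℝ) :
    wmod 2 f t a b = sSup {v | ∃ u x, 0 < u ∧ u ≤ t ∧ a ≤ x - u ∧ x + u ≤ b ∧
      v = |f (x + u) - 2 * f x + f (x - u)|} := by
  simp only [wmod, Finset.sum_range_succ, Finset.sum_range_zero]
  norm_num
  ring_nf

theorem abs_sub_le_wmod_one (hf : ContinuousOn f (Icc a b)) {x y : ℝ} (hax : a ≤ x) (hxy : x < y)
    (hyb : y ≤ b) (hyx : y - x ≤ t) : |f y - f x| ≤ wmod 1 f t a b := by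
  obtain ⟨M, hM⟩ := isCompact_Icc.exists_bound_of_continuousOn hf
  rw [wmod_one_eq]
  refine le_csSup ⟨2 * M, ?_⟩ ⟨y - x, (x + y) / 2, by linarith, hyx, by linarith, by linarith, ?_⟩
  · rintro v ⟨u, z, hu, -, hz, hz', rfl⟩
    have h1 := hM (z + u / 2) ⟨by linarith, hz'⟩
    have h2 := hM (z - u / 2) ⟨hz, by linarith⟩
    simp only [Real.norm_eq_abs] at h1 h2
    linarith [abs_sub (f (z + u / 2)) (f (z - u / 2))]
  · ring_nf

theorem wmod_one_le {M : ℝ} (hM : 0 ≤ M)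
    (h : ∀ x y, a ≤ x → x < y → y ≤ b → y - x ≤ t → |f y - f x| ≤ M) : wmod 1 f t a b ≤ M := by
  rw [wmod_one_eq]
  refine Real.sSup_le ?_ hM
  rintro v ⟨u, x, hu, hut, hx, hx', rfl⟩
  exact h _ _ hx (by linarith) hx' (by linarith)

theorem abs_second_diff_le_wmod_two (hf : ContinuousOn f (Icc a b)) {x u : ℝ} (hu : 0 < u)
    (hut : u ≤ t) (hax : a ≤ x - u) (hxb : x + u ≤ b) :
    |f (x + u) - 2 * f x + f (x - u)| ≤ wmod 2 f t a b := by
  obtain ⟨M, hM⟩ := isCompact_Icc.exists_bound_of_continuousOn hf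
  rw [wmod_two_eq]
  refine le_csSup ⟨4 * M, ?_⟩ ⟨u, x, hu, hut, hax, hxb, rfl⟩
  rintro v ⟨u, z, hu, -, hz, hz', rfl⟩
  have h1 := hM (z + u) ⟨by linarith, hz'⟩
  have h2 := hM z ⟨by linarith, by linarith⟩
  have h3 := hM (z - u) ⟨hz, by linarith⟩
  simp only [Real.norm_eq_abs] at h1 h2 h3
  have h2' : |2 * f z| = 2 * |f z| := by rw [abs_mul, abs_two]
  linarith [abs_add_le (f (z + u) - 2 * f z) (f (z - u)), abs_sub (f (z + u)) (2 * f z)]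

theorem wmod_two_sub_eval_of_natDegree_le_one {p : ℝ[X]} (hp : p.natDegree ≤ 1)
    (f : ℝ → ℝ) (t a b : ℝ) : wmod 2 (fun x => f x - p.eval x) t a b = wmod 2 f t a b := by
  obtain ⟨c, d, rfl⟩ := exists_eq_X_add_C_of_natDegree_le_one hp
  simp only [wmod_two_eq, eval_add, eval_mul, eval_C, eval_X]
  ring_nf

end Modulus

section Marchaud

variable {f : ℝ → ℝ} {t a b : ℝ}

theorem wmod_one_le_two_mul {M : ℝ} (hM : 0 ≤ M) (hfM : ∀ y ∈ Icc a b, |f y| ≤ M) :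
    wmod 1 f t a b ≤ 2 * M :=
  wmod_one_le (by linarith) fun x y hax hxy hyb _ => by
    linarith [abs_sub (f y) (f x), hfM x ⟨hax, by linarith⟩, hfM y ⟨by linarith, hyb⟩]

theorem abs_le_wmod_two_of_eq_zero (hf : ContinuousOn f (Icc a b)) (ha : f a = 0)
    (hb : f b = 0) {y : ℝ} (hy : y ∈ Icc a b) : |f y| ≤ wmod 2 f ((b - a) / 2) a b := by
  obtain ⟨x, hx, hmax⟩ := isCompact_Icc.exists_isMaxOn ⟨y, hy⟩ hf.abs
  refine (hmax hy).trans ?_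
  rcases hx.1.eq_or_lt with rfl | hax
  · simpa [ha] using wmod_nonneg
  rcases hx.2.eq_or_lt with rfl | hxb
  · simpa [hb] using wmod_nonneg
  -- `2 f x = (f (x + u) + f (x - u)) - Δ²ᵤ f x`, and when `x - u` or `x + u` is an endpoint
  -- the pair sum is at most `|f x|` in absolute value
  have key : ∀ u, 0 < u → 2 * u ≤ b - a → a ≤ x - u → x + u ≤ b →
      f (x - u) = 0 ∨ f (x + u) = 0 → |f x| ≤ wmod 2 f ((b - a) / 2) a b := by
    intro u hu hub hxu hxu' hzero
    have hΔ := abs_second_diff_le_wmod_two (t := (b - a) / 2) hf hu (by linarith) hxu hxu'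
    have hpair : |f (x + u) + f (x - u)| ≤ |f x| := by
      rcases hzero with h | h
      · simpa [h] using hmax ⟨by linarith, hxu'⟩
      · simpa [h] using hmax ⟨hxu, by linarith⟩
    have h2 : |2 * f x| = 2 * |f x| := by rw [abs_mul, abs_two]
    rw [show 2 * f x = f (x + u) + f (x - u) - (f (x + u) - 2 * f x + f (x - u)) by ring] at h2
    linarith [abs_sub (f (x + u) + f (x - u)) (f (x + u) - 2 * f x + f (x - u))]
  rcases le_total (x - a) (b - x) with h | h
  · exact key (x - a) (by linarith) (by linarith) (by linarith) (by linarith)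
      (Or.inl (by rw [sub_sub_cancel, ha]))
  · exact key (b - x) (by linarith) (by linarith) (by linarith) (by linarith)
      (Or.inr (by rw [add_sub_cancel, hb]))

theorem wmod_one_le_half_add_half (hf : ContinuousOn f (Icc a b)) (htab : 3 * t ≤ b - a) :
    wmod 1 f t a b ≤ wmod 1 f (2 * t) a b / 2 + wmod 2 f t a b / 2 := by
  have hω₁ : 0 ≤ wmod 1 f (2 * t) a b := wmod_nonneg
  have hω₂ : 0 ≤ wmod 2 f t a b := wmod_nonneg
  refine wmod_one_le (by linarith) fun x y hax hxy hyb hyx => ?_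
  -- extend `[x, y]` by its own length to whichever side fits in `[a, b]`
  by_cases hright : y + (y - x) ≤ b
  · have h1 := abs_sub_le_wmod_one (t := 2 * t) hf hax (by linarith : x < y + (y - x)) hright
      (by linarith)
    have h2 := abs_second_diff_le_wmod_two hf (sub_pos.mpr hxy) hyx (by linarith) hright
    rw [sub_sub_cancel] at h2
    rw [abs_le] at *
    constructor <;> linarith
  · have hleft : a ≤ x - (y - x) := by linarith
    have h1 := abs_sub_le_wmod_one (t := 2 * t) hf hleft (by linarith : x - (y - x) < y) hyb
      (by linarith)
    have h2 := abs_second_diff_le_wmod_two hf (sub_pos.mpr hxy) hyx hleft (by linarith)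
    rw [add_sub_cancel] at h2
    rw [abs_le] at *
    constructor <;> linarith

end Marchaud

theorem le_mul_rpow_of_le_half_two_mul_add {φ : ℝ → ℝ} {β s B D : ℝ}
    (hbase : ∀ t, s < t → φ t ≤ D * t ^ β)
    (hstep : ∀ t, 0 < t → t ≤ s → φ t ≤ φ (2 * t) / 2 + B * t ^ β / 2)
    (hD : 2 ^ β * D / 2 + B / 2 ≤ D) {t : ℝ} (ht : 0 < t) : φ t ≤ D * t ^ β := by
  have hdyadic : ∀ n : ℕ, ∀ t, 0 < t → s < 2 ^ n * t → φ t ≤ D * t ^ β := by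
    intro n
    induction n with
    | zero => exact fun t _ hn => hbase t (by simpa using hn)
    | succ n ih =>
      intro t ht hn
      rcases lt_or_ge s t with hst | hts
      · exact hbase t hst
      have h2t := ih (2 * t) (by linarith) (by rwa [pow_succ, mul_assoc] at hn)
      have htβ : 0 ≤ t ^ β := Real.rpow_nonneg ht.le β
      calc φ t ≤ φ (2 * t) / 2 + B * t ^ β / 2 := hstep t ht hts
        _ ≤ D * (2 * t) ^ β / 2 + B * t ^ β / 2 := by linarith
        _ = (2 ^ β * D / 2 + B / 2) * t ^ β := by
          rw [Real.mul_rpow zero_le_two ht.le]; ring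
        _ ≤ D * t ^ β := mul_le_mul_of_nonneg_right hD htβ
  obtain ⟨n, hn⟩ := pow_unbounded_of_one_lt (s / t) one_lt_two
  exact hdyadic n t ht (by rwa [div_lt_iff₀ ht] at hn)

theorem wmod_one_le_of_wmod_two_le_rpow {h : ℝ → ℝ} {β B : ℝ} (hβ0 : 0 ≤ β) (hβ1 : β < 1)
    (hh : ContinuousOn h (Icc (-1) 1)) (hm1 : h (-1) = 0) (hp1 : h 1 = 0)
    (hω₂ : ∀ t, 0 < t → wmod 2 h t (-1) 1 ≤ B * t ^ β) {t : ℝ} (ht : 0 < t) :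
    wmod 1 h t (-1) 1 ≤ 3 / (1 - 2 ^ (β - 1)) * t ^ β * B := by
  have hω₂_one : wmod 2 h 1 (-1) 1 ≤ B := by simpa using hω₂ 1 one_pos
  have hB : 0 ≤ B := wmod_nonneg.trans hω₂_one
  have hsup : ∀ y ∈ Icc (-1 : ℝ) 1, |h y| ≤ B := fun y hy =>
    (abs_le_wmod_two_of_eq_zero hh hm1 hp1 hy).trans (by norm_num [hω₂_one])
  have hq : 0 < 1 - (2 : ℝ) ^ (β - 1) :=
    sub_pos.mpr (Real.rpow_lt_one_of_one_lt_of_neg one_lt_two (by linarith))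
  -- `c (1 - 2 ^ (β - 1)) = 3` closes the dyadic recursion, and `3 (2/3) ^ β ≥ 2` covers `t > 2/3`
  set c := 3 / (1 - (2 : ℝ) ^ (β - 1))
  have hc3 : 3 ≤ c :=
    le_div_self (by norm_num) hq (by linarith [Real.rpow_pos_of_pos two_pos (β - 1)])
  have hcq : c * (1 - 2 ^ (β - 1)) = 3 := div_mul_cancel₀ _ hq.ne'
  rw [mul_right_comm]
  refine le_mul_rpow_of_le_half_two_mul_add (φ := fun t => wmod 1 h t (-1) 1) (s := 2 / 3)
    (B := B) (D := c * B) (fun t ht => ?_) (fun t ht hts => ?_) ?_ ht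
  · have htβ : 2 / 3 ≤ t ^ β := calc
      (2 / 3 : ℝ) ≤ (2 / 3) ^ β := Real.self_le_rpow_of_le_one (by norm_num) (by norm_num) hβ1.le
      _ ≤ t ^ β := Real.rpow_le_rpow (by norm_num) ht.le hβ0
    have hct : 2 ≤ c * t ^ β := by nlinarith
    nlinarith [wmod_one_le_two_mul (t := t) hB hsup, mul_le_mul_of_nonneg_right hct hB]
  · have := wmod_one_le_half_add_half (t := t) hh (by linarith)
    linarith [hω₂ t ht]
  · have h2β : (2 : ℝ) ^ β = 2 * 2 ^ (β - 1) := by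
      simpa using Real.rpow_add two_pos 1 (β - 1)
    rw [h2β]
    nlinarith

/-- for non-integer `α > 0`, `ν = ⌈α⌉ − 1`, if `f ∈ C^ν[−1,1]` with
Zygmund-type seminorm `sup_t t^(ν−α) ω₂(f^(ν),t) ≤ B`, and `L` is a polynomial of
degree `≤ ν+1` whose `ν`-th derivative interpolates `f^(ν)` at `±1`, then
`g = f − L` satisfies `ω₁(g^(ν), t; [−1,1]) ≤ c(α)·t^(α−ν)·B` for `0 < t ≤ 2`. -/
theorem stmt11 (α : ℝ) (hα : 0 < α) (hnotnat : ∀ n : ℕ, α ≠ n) :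
    ∃ c : ℝ, 0 < c ∧ ∀ (f : ℝ → ℝ) (B : ℝ) (L : Polynomial ℝ),
      ContDiffOn ℝ (⌈α⌉₊ - 1) f (Icc (-1) 1) →
      (∀ t : ℝ, 0 < t →
        wmod 2 (iteratedDerivWithin (⌈α⌉₊ - 1) f (Icc (-1) 1)) t (-1) 1 ≤
          B * t ^ (α - ((⌈α⌉₊ : ℝ) - 1))) →
      L.natDegree ≤ ⌈α⌉₊ →
      ((Polynomial.derivative^[⌈α⌉₊ - 1] L).eval (-1) =
        iteratedDerivWithin (⌈α⌉₊ - 1) f (Icc (-1) 1) (-1)) →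
      ((Polynomial.derivative^[⌈α⌉₊ - 1] L).eval 1 =
        iteratedDerivWithin (⌈α⌉₊ - 1) f (Icc (-1) 1) 1) →
      ∀ t : ℝ, 0 < t → t ≤ 2 →
        wmod 1 (iteratedDerivWithin (⌈α⌉₊ - 1) (fun x => f x - L.eval x) (Icc (-1) 1))
            t (-1) 1 ≤
          c * t ^ (α - ((⌈α⌉₊ : ℝ) - 1)) * B := by
  set ν := ⌈α⌉₊ - 1
  set β := α - ((⌈α⌉₊ : ℝ) - 1)
  have hβ0 : 0 ≤ β := by linarith [Nat.ceil_lt_add_one hα.le]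
  have hβ1 : β < 1 := by linarith [(Nat.le_ceil α).lt_of_ne (hnotnat ⌈α⌉₊)]
  refine ⟨3 / (1 - 2 ^ (β - 1)), div_pos three_pos
    (sub_pos.mpr (Real.rpow_lt_one_of_one_lt_of_neg one_lt_two (by linarith))), ?_⟩
  intro f B L hf hω₂ hdeg hm1 hp1 t ht _
  have hs : UniqueDiffOn ℝ (Icc (-1 : ℝ) 1) := uniqueDiffOn_Icc (by norm_num)
  have hf' : ContDiffOn ℝ ν f (Icc (-1) 1) := by exact_mod_cast hf
  have hP : (derivative^[ν] L).natDegree ≤ 1 :=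
    (natDegree_iterate_derivative L ν).trans (by omega)
  rw [wmod_congr fun x hx => iteratedDerivWithin_sub_eval hf' hs hx L]
  refine wmod_one_le_of_wmod_two_le_rpow
    (h := fun x => iteratedDerivWithin ν f (Icc (-1) 1) x - (derivative^[ν] L).eval x) hβ0 hβ1
    ((hf'.continuousOn_iteratedDerivWithin le_rfl hs).sub
      (derivative^[ν] L).continuous.continuousOn)
    (sub_eq_zero.mpr hm1.symm) (sub_eq_zero.mpr hp1.symm) (fun t ht => ?_) ht
  rw [wmod_two_sub_eval_of_natDegree_le_one hP]
  exact hω₂ t ht
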